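/- For the sequence α_t = (H+1)/(H+t) with H ≥ 1, define α_t^i = α_i ∏_{j=i+1}^t (1-α_j). Then for every t ≥ 1, ∑_{i=1}^t (α_t^i)^2 ≤ 2H/t. -/

import Mathlib

/-!
The weights `α_t^i` are nonnegative, sum to `1` (the sum telescopes to `1 - ∏_{j=1}^t (1 - α_j)`
and `α_1 = 1`), and each is at most `α_t`, because `α_n (1 - α_{n+1}) ≤ α_{n+1}`.
Hence `∑ (α_t^i)^2 ≤ α_t ∑ α_t^i = α_t = (H+1)/(H+t) ≤ 2H/t`.
-/

open Finset

section Weights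

variable {R : Type*}

theorem sum_mul_prod_Icc_one_sub [CommRing R] (α : ℕ → R) (t : ℕ) :
    ∑ i ∈ Icc 1 t, α i * ∏ j ∈ Icc (i + 1) t, (1 - α j) = 1 - ∏ j ∈ Icc 1 t, (1 - α j) := by
  induction t with
  | zero => simp
  | succ t ih =>
    have hsplit : ∀ i ∈ Icc 1 t, α i * ∏ j ∈ Icc (i + 1) (t + 1), (1 - α j) =
        α i * (∏ j ∈ Icc (i + 1) t, (1 - α j)) * (1 - α (t + 1)) := fun i hi => by
      rw [prod_Icc_succ_top (by simp at hi; omega), mul_assoc]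
    have hlast : ∏ j ∈ Icc (t + 1 + 1) (t + 1), (1 - α j) = 1 := by
      rw [Icc_eq_empty (by omega), prod_empty]
    rw [sum_Icc_succ_top (by omega), sum_congr rfl hsplit, ← sum_mul, ih, hlast,
      prod_Icc_succ_top (a := 1) (by omega)]
    ring

variable [CommRing R] [LinearOrder R] [IsStrictOrderedRing R]

theorem mul_prod_Icc_one_sub_le {α : ℕ → R} {i : ℕ}
    (hα : ∀ n, i ≤ n → 0 ≤ 1 - α (n + 1))
    (hstep : ∀ n, i ≤ n → α n * (1 - α (n + 1)) ≤ α (n + 1)) {t : ℕ} (hit : i ≤ t) :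
    α i * ∏ j ∈ Icc (i + 1) t, (1 - α j) ≤ α t := by
  induction t, hit using Nat.le_induction with
  | base => simp
  | succ n hin ih =>
    rw [prod_Icc_succ_top (by omega), ← mul_assoc]
    exact (mul_le_mul_of_nonneg_right ih (hα n hin)).trans (hstep n hin)

theorem sum_sq_le_mul_sum {ι : Type*} (s : Finset ι) {f : ι → R} {M : R}
    (h0 : ∀ i ∈ s, 0 ≤ f i) (hM : ∀ i ∈ s, f i ≤ M) :
    ∑ i ∈ s, f i ^ 2 ≤ M * ∑ i ∈ s, f i := by
  rw [mul_sum]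
  refine sum_le_sum fun i hi => ?_
  rw [sq]
  exact mul_le_mul_of_nonneg_right (hM i hi) (h0 i hi)

end Weights

section LearningRate

noncomputable def learningRate (H n : ℕ) : ℝ := ((H : ℝ) + 1) / ((H : ℝ) + n)

variable {H : ℕ}

theorem learningRate_one (hH : 1 ≤ H) : learningRate H 1 = 1 := by
  have : (0 : ℝ) < H + 1 := by positivity
  simp [learningRate, this.ne']

theorem learningRate_nonneg (n : ℕ) : 0 ≤ learningRate H n := by
  unfold learningRate
  positivity

theorem one_sub_learningRate_nonneg {n : ℕ} (hn : 1 ≤ n) : 0 ≤ 1 - learningRate H n := by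
  have hn' : (1 : ℝ) ≤ n := by exact_mod_cast hn
  rw [learningRate, sub_nonneg, div_le_one (by positivity)]
  linarith

theorem learningRate_mul_one_sub_le (hH : 1 ≤ H) (n : ℕ) :
    learningRate H n * (1 - learningRate H (n + 1)) ≤ learningRate H (n + 1) := by
  have hH' : (0 : ℝ) < H := by exact_mod_cast hH
  have hn : (0 : ℝ) ≤ n := n.cast_nonneg
  have hsub : 1 - learningRate H (n + 1) = n / (H + n + 1) := by
    rw [learningRate]
    field_simp
    push_cast
    ring
  calc learningRate H n * (1 - learningRate H (n + 1))
      = learningRate H (n + 1) * (n / (H + n)) := by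
        rw [hsub, learningRate, learningRate]
        push_cast
        ring
    _ ≤ learningRate H (n + 1) * 1 :=
        mul_le_mul_of_nonneg_left (div_le_one_of_le₀ (by linarith) (by positivity))
          (learningRate_nonneg _)
    _ = learningRate H (n + 1) := mul_one _

theorem learningRate_le (hH : 1 ≤ H) {t : ℕ} (ht : 1 ≤ t) :
    learningRate H t ≤ 2 * (H : ℝ) / t := by
  have hH' : (1 : ℝ) ≤ H := by exact_mod_cast hH
  have ht' : (1 : ℝ) ≤ t := by exact_mod_cast ht
  rw [learningRate, div_le_div_iff₀ (by linarith) (by linarith)]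
  nlinarith

end LearningRate

/-- For `α_i = (H+1)/(H+i)` with `H ≥ 1`, the weights
`α_t^i = α_i * ∏_{j=i+1}^t (1 - α_j)` satisfy `∑_{i=1}^t (α_t^i)^2 ≤ 2H/t`. -/
theorem stmt2 (H t : ℕ) (hH : 1 ≤ H) (ht : 1 ≤ t) :
    ∑ i ∈ Finset.Icc 1 t,
        (((H : ℝ) + 1) / ((H : ℝ) + i) *
          ∏ j ∈ Finset.Icc (i + 1) t, (1 - ((H : ℝ) + 1) / ((H : ℝ) + j))) ^ 2 ≤
      2 * (H : ℝ) / t := by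
  set α := learningRate H
  have hweight_nonneg : ∀ i ∈ Icc 1 t, 0 ≤ α i * ∏ j ∈ Icc (i + 1) t, (1 - α j) :=
    fun i _ => mul_nonneg (learningRate_nonneg i) <| prod_nonneg fun j hj =>
      one_sub_learningRate_nonneg (by simp at hj; omega)
  have hweight_le : ∀ i ∈ Icc 1 t, α i * ∏ j ∈ Icc (i + 1) t, (1 - α j) ≤ α t :=
    fun i hi => mul_prod_Icc_one_sub_le
      (fun n _ => one_sub_learningRate_nonneg n.succ_pos)
      (fun n _ => learningRate_mul_one_sub_le hH n) (mem_Icc.mp hi).2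
  have hweight_sum : ∑ i ∈ Icc 1 t, α i * ∏ j ∈ Icc (i + 1) t, (1 - α j) = 1 := by
    rw [sum_mul_prod_Icc_one_sub, ← insert_Icc_add_one_left_eq_Icc ht, prod_insert (by simp),
      show α 1 = 1 from learningRate_one hH, sub_self, zero_mul, sub_zero]
  calc _ ≤ α t * ∑ i ∈ Icc 1 t, α i * ∏ j ∈ Icc (i + 1) t, (1 - α j) :=
        sum_sq_le_mul_sum _ hweight_nonneg hweight_le
    _ ≤ 2 * (H : ℝ) / t := by rw [hweight_sum, mul_one]; exact learningRate_le hH ht
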